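/- arXiv:1706.05591 — 6 statements merged into one kernel-verified Lean document; each statement's English description precedes it below -/
import Mathlib

section
/- For every T > 0, the kernel k(t) = ∫₀¹ t^{-α} μ(α)/Γ(1-α) dα belongs to L¹(0,T), and moreover ∫₀ᵀ k(t) dt = ∫₀¹ T^{1-α} μ(α)/Γ(2-α) dα ≤ 2 max{1,T} ∫₀¹ μ(α) dα. -/
open MeasureTheory Real Set

/-! For `α < 1` the power `t ^ (-α)` is integrable on `(0, T)` with integral
`T ^ (1 - α) / (1 - α)`, and `(1 - α) Γ(1 - α) = Γ(2 - α)`. Since the integrand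
`t ^ (-α) μ(α) / Γ(1 - α)` is nonnegative, Tonelli–Fubini on `(0, T) × (0, 1)` gives both the
integrability of `k` and the formula for its integral. The bound follows pointwise in `α`
from `T ^ (1 - α) ≤ max 1 T` and `Γ ≥ 1/2` on `[1, ∞)`: on `[1, 2]` because
`x Γ(x) = Γ(x + 1) ≥ Γ(2) = 1`, and beyond `2` because `Γ` is increasing there. -/

namespace Real

theorem one_le_Gamma_of_two_le {x : ℝ} (hx : 2 ≤ x) : 1 ≤ Gamma x :=
  Gamma_two ▸ Gamma_strictMonoOn_Ici.monotoneOn self_mem_Ici hx hx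

theorem one_half_le_Gamma {x : ℝ} (hx : 1 ≤ x) : 1 / 2 ≤ Gamma x := by
  rcases le_total 2 x with h2 | h2
  · linarith [one_le_Gamma_of_two_le h2]
  · have hrec : Gamma (x + 1) = x * Gamma x := Gamma_add_one (by linarith)
    have hstep : 1 ≤ Gamma (x + 1) := one_le_Gamma_of_two_le (by linarith)
    nlinarith [Gamma_pos_of_pos (by linarith : 0 < x)]

@[fun_prop]
theorem measurable_Gamma : Measurable Gamma := by
  refine measurable_of_countable_not_continuousAt <|
    (countable_range fun m : ℕ => -(m : ℝ)).mono fun x hx => ?_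
  by_contra hpole
  exact hx (differentiableAt_Gamma fun m hm => hpole ⟨m, hm.symm⟩).continuousAt

theorem Gamma_two_sub {α : ℝ} (hα : α < 1) : Gamma (2 - α) = (1 - α) * Gamma (1 - α) := by
  rw [show 2 - α = 1 - α + 1 by ring, Gamma_add_one (by linarith)]

theorem rpow_le_max_one {T s : ℝ} (hT : 0 ≤ T) (hs₀ : 0 ≤ s) (hs₁ : s ≤ 1) :
    T ^ s ≤ max 1 T := by
  rcases le_total T 1 with h | h
  · exact (rpow_le_one hT h hs₀).trans (le_max_left _ _)
  · calc T ^ s ≤ T ^ (1 : ℝ) := rpow_le_rpow_of_exponent_le h hs₁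
      _ = T := rpow_one T
      _ ≤ max 1 T := le_max_right _ _

end Real

theorem integral_Ioo_rpow_neg {T α : ℝ} (hT : 0 ≤ T) (hα : α < 1) :
    ∫ t in Ioo 0 T, t ^ (-α) = T ^ (1 - α) / (1 - α) := by
  rw [← integral_Ioc_eq_integral_Ioo, ← intervalIntegral.integral_of_le hT,
    integral_rpow (Or.inl (by linarith)), zero_rpow (by linarith : -α + 1 ≠ 0)]
  ring_nf

theorem rpow_div_mul_div_Gamma_one_sub (T c : ℝ) {α : ℝ} (hα : α < 1) :
    T ^ (1 - α) / (1 - α) * (c / Gamma (1 - α)) = T ^ (1 - α) * c / Gamma (2 - α) := by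
  have : Gamma (1 - α) ≠ 0 := (Gamma_pos_of_pos (by linarith)).ne'
  rw [Gamma_two_sub hα]
  field_simp

theorem rpow_mul_div_Gamma_two_sub_le {T α c : ℝ} (hT : 0 ≤ T) (hα₀ : 0 ≤ α) (hα₁ : α ≤ 1)
    (hc : 0 ≤ c) : T ^ (1 - α) * c / Gamma (2 - α) ≤ 2 * max 1 T * c :=
  calc T ^ (1 - α) * c / Gamma (2 - α) ≤ max 1 T * c / (1 / 2) :=
        div_le_div₀ (by positivity)
          (mul_le_mul_of_nonneg_right (rpow_le_max_one hT (by linarith) (by linarith)) hc)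
          (by norm_num) (one_half_le_Gamma (by linarith))
    _ = 2 * max 1 T * c := by ring

section RpowKernel

variable {w : ℝ → ℝ} {T : ℝ}

theorem integral_Ioo_rpow_neg_mul (hT : 0 ≤ T) {α : ℝ} (hα : α < 1) :
    ∫ t in Ioo 0 T, t ^ (-α) * w α = T ^ (1 - α) / (1 - α) * w α := by
  rw [integral_mul_const, integral_Ioo_rpow_neg hT hα]

theorem integrable_rpow_neg_mul_prod (hT : 0 < T)
    (hw : AEStronglyMeasurable w (volume.restrict (Ioo 0 1)))
    (hw_nonneg : ∀ α ∈ Ioo (0 : ℝ) 1, 0 ≤ w α)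
    (hw_int : IntegrableOn (fun α => T ^ (1 - α) / (1 - α) * w α) (Ioo 0 1)) :
    Integrable (fun p : ℝ × ℝ => p.1 ^ (-p.2) * w p.2)
      ((volume.restrict (Ioo 0 T)).prod (volume.restrict (Ioo 0 1))) := by
  have hm : AEStronglyMeasurable (fun p : ℝ × ℝ => p.1 ^ (-p.2) * w p.2)
      ((volume.restrict (Ioo 0 T)).prod (volume.restrict (Ioo 0 1))) :=
    (measurable_fst.pow measurable_snd.neg).aestronglyMeasurable.mul hw.comp_snd
  refine (integrable_prod_iff' hm).2 ⟨?_, hw_int.congr ?_⟩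
  · filter_upwards [ae_restrict_mem measurableSet_Ioo] with α hα
    exact ((intervalIntegral.integrableOn_Ioo_rpow_iff hT).2 (by linarith [hα.2])).mul_const _
  · filter_upwards [ae_restrict_mem measurableSet_Ioo] with α hα
    rw [← integral_Ioo_rpow_neg_mul hT.le hα.2]
    refine setIntegral_congr_fun measurableSet_Ioo fun t ht => ?_
    rw [Real.norm_of_nonneg (mul_nonneg (rpow_nonneg ht.1.le _) (hw_nonneg α hα))]

theorem integrableOn_integral_rpow_neg_mul (hT : 0 < T)
    (hw : AEStronglyMeasurable w (volume.restrict (Ioo 0 1)))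
    (hw_nonneg : ∀ α ∈ Ioo (0 : ℝ) 1, 0 ≤ w α)
    (hw_int : IntegrableOn (fun α => T ^ (1 - α) / (1 - α) * w α) (Ioo 0 1)) :
    IntegrableOn (fun t => ∫ α in Ioo 0 1, t ^ (-α) * w α) (Ioo 0 T) :=
  (integrable_rpow_neg_mul_prod hT hw hw_nonneg hw_int).integral_prod_left

theorem integral_integral_rpow_neg_mul (hT : 0 < T)
    (hw : AEStronglyMeasurable w (volume.restrict (Ioo 0 1)))
    (hw_nonneg : ∀ α ∈ Ioo (0 : ℝ) 1, 0 ≤ w α)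
    (hw_int : IntegrableOn (fun α => T ^ (1 - α) / (1 - α) * w α) (Ioo 0 1)) :
    ∫ t in Ioo 0 T, ∫ α in Ioo 0 1, t ^ (-α) * w α =
      ∫ α in Ioo 0 1, T ^ (1 - α) / (1 - α) * w α := by
  rw [integral_integral_swap (integrable_rpow_neg_mul_prod hT hw hw_nonneg hw_int)]
  exact setIntegral_congr_fun measurableSet_Ioo fun α hα => integral_Ioo_rpow_neg_mul hT.le hα.2

end RpowKernel

theorem stmt_0_general (μ : ℝ → ℝ)
    (hμ_int : IntegrableOn μ (Ioo 0 1))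
    (hμ_nonneg : ∀ α ∈ Ioo (0:ℝ) 1, 0 ≤ μ α)
    (k : ℝ → ℝ)
    (hk : ∀ t : ℝ, 0 < t → k t = ∫ α in Ioo (0:ℝ) 1, t ^ (-α) * μ α / Real.Gamma (1 - α))
    (T : ℝ) (hT : 0 < T) :
    IntegrableOn k (Ioo 0 T) ∧
    (∫ t in Ioo (0:ℝ) T, k t) = (∫ α in Ioo (0:ℝ) 1, T ^ (1 - α) * μ α / Real.Gamma (2 - α)) ∧
    (∫ α in Ioo (0:ℝ) 1, T ^ (1 - α) * μ α / Real.Gamma (2 - α)) ≤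
      2 * max 1 T * ∫ α in Ioo (0:ℝ) 1, μ α := by
  set w : ℝ → ℝ := fun α => μ α / Gamma (1 - α)
  have hμ_meas := hμ_int.aemeasurable
  have hw : AEStronglyMeasurable w (volume.restrict (Ioo 0 1)) := by fun_prop
  have hw_nonneg : ∀ α ∈ Ioo (0 : ℝ) 1, 0 ≤ w α := fun α hα =>
    div_nonneg (hμ_nonneg α hα) (Gamma_pos_of_pos (by linarith [hα.2])).le
  have hk_eq : EqOn k (fun t => ∫ α in Ioo 0 1, t ^ (-α) * w α) (Ioo 0 T) := fun t ht => by
    simp only [hk t ht.1, w, mul_div_assoc]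
  have hweight : EqOn (fun α => T ^ (1 - α) / (1 - α) * w α)
      (fun α => T ^ (1 - α) * μ α / Gamma (2 - α)) (Ioo 0 1) := fun α hα =>
    rpow_div_mul_div_Gamma_one_sub T (μ α) hα.2
  have hbound : ∀ α ∈ Ioo (0 : ℝ) 1, T ^ (1 - α) * μ α / Gamma (2 - α) ≤ 2 * max 1 T * μ α :=
    fun α hα => rpow_mul_div_Gamma_two_sub_le hT.le hα.1.le hα.2.le (hμ_nonneg α hα)
  have hint : IntegrableOn (fun α => T ^ (1 - α) * μ α / Gamma (2 - α)) (Ioo 0 1) := by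
    refine Integrable.mono' (hμ_int.const_mul (2 * max 1 T)) ?_ ?_
    · exact (by fun_prop : AEMeasurable _ _).aestronglyMeasurable
    · filter_upwards [ae_restrict_mem measurableSet_Ioo] with α hα
      rw [Real.norm_of_nonneg (div_nonneg (mul_nonneg (rpow_nonneg hT.le _) (hμ_nonneg α hα))
        (Gamma_nonneg_of_nonneg (by linarith [hα.2])))]
      exact hbound α hα
  have hw_int := hint.congr_fun hweight.symm measurableSet_Ioo
  refine ⟨(integrableOn_integral_rpow_neg_mul hT hw hw_nonneg hw_int).congr_fun hk_eq.symm
    measurableSet_Ioo, ?_, ?_⟩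
  · rw [setIntegral_congr_fun measurableSet_Ioo hk_eq,
      integral_integral_rpow_neg_mul hT hw hw_nonneg hw_int,
      setIntegral_congr_fun measurableSet_Ioo hweight]
  · rw [← integral_const_mul]
    exact setIntegral_mono_on hint (hμ_int.const_mul _) measurableSet_Ioo hbound

/-- For every `T > 0`, the kernel `k(t) = ∫₀¹ t^{-α} μ(α)/Γ(1-α) dα`
belongs to `L¹(0,T)`, and `∫₀ᵀ k(t) dt = ∫₀¹ T^{1-α} μ(α)/Γ(2-α) dα
≤ 2 max{1,T} ∫₀¹ μ(α) dα`. -/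
theorem stmt_0 (μ : ℝ → ℝ)
    (hμ_int : IntegrableOn μ (Ioo 0 1))
    (hμ_nonneg : ∀ α ∈ Ioo (0:ℝ) 1, 0 ≤ μ α)
    (hμ_ne : ¬ (∀ᵐ α ∂(volume.restrict (Ioo (0:ℝ) 1)), μ α = 0))
    (k : ℝ → ℝ)
    (hk : ∀ t : ℝ, 0 < t → k t = ∫ α in Ioo (0:ℝ) 1, t ^ (-α) * μ α / Real.Gamma (1 - α))
    (T : ℝ) (hT : 0 < T) :
    IntegrableOn k (Ioo 0 T) ∧
    (∫ t in Ioo (0:ℝ) T, k t) = (∫ α in Ioo (0:ℝ) 1, T ^ (1 - α) * μ α / Real.Gamma (2 - α)) ∧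
    (∫ α in Ioo (0:ℝ) 1, T ^ (1 - α) * μ α / Real.Gamma (2 - α)) ≤
      2 * max 1 T * ∫ α in Ioo (0:ℝ) 1, μ α :=
  stmt_0_general μ hμ_int hμ_nonneg k hk T hT
end

section
/- The function p ↦ ∫₀¹ p^α μ(α) dα (with p^α the principal branch of the complex power) is analytic on ℂ \ (-∞, 0] and does not vanish there; consequently F(p) := 1 / ∫₀¹ p^α μ(α) dα is analytic on ℂ \ (-∞, 0]. -/
/-!
Writing `p ^ α = exp (α log p)`, the function is `I ∘ log` with `I z = ∫₀¹ exp (z α) μ(α) dα`.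
`I` is entire (differentiation under the integral sign, `α` ranging over a bounded set) and `log`
is analytic on the slit plane. For `z = x + iy` with `|y| < π`, rotating by `exp (-iy/2)` gives
`Re (exp (-iy/2) I z) = ∫₀¹ exp (xα) cos (y (α - 1/2)) μ(α) dα`, and the integrand is at least
`exp (-|x|) cos (y/2) μ(α)` with `cos (y/2) > 0`; hence `I z ≠ 0` as soon as `∫₀¹ μ > 0`.
-/

open MeasureTheory Real Set

section ExpIntegral

variable {ν : Measure ℝ} {R : ℝ}

lemma norm_cexp_mul_ofReal_le (w : ℂ) {α : ℝ} (hα : |α| ≤ R) :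
    ‖Complex.exp (w * α)‖ ≤ Real.exp (‖w‖ * R) :=
  calc ‖Complex.exp (w * α)‖ ≤ Real.exp ‖w * α‖ := Complex.norm_exp_le_exp_norm _
    _ ≤ Real.exp (‖w‖ * R) := by
      rw [norm_mul, Complex.norm_real, Real.norm_eq_abs]
      gcongr

lemma integrable_cexp_mul_ofReal_mul {g : ℝ → ℂ} (hg : Integrable g ν)
    (hR : ∀ᵐ α ∂ν, |α| ≤ R) (w : ℂ) :
    Integrable (fun α : ℝ => Complex.exp (w * α) * g α) ν := by
  refine (hg.norm.const_mul (Real.exp (‖w‖ * R))).mono' ?_ ?_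
  · exact (by fun_prop : Continuous fun α : ℝ => Complex.exp (w * α)).aestronglyMeasurable.mul
      hg.aestronglyMeasurable
  · filter_upwards [hR] with α hα
    rw [norm_mul]
    gcongr
    exact norm_cexp_mul_ofReal_le w hα

theorem differentiable_integral_cexp_mul_ofReal_mul {g : ℝ → ℂ} (hg : Integrable g ν)
    (hR : ∀ᵐ α ∂ν, |α| ≤ R) :
    Differentiable ℂ fun z : ℂ => ∫ α, Complex.exp (z * α) * g α ∂ν := by
  intro z
  have hbound : ∀ᵐ (α : ℝ) ∂ν, ∀ w ∈ Metric.ball z 1,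
      ‖Complex.exp (w * α) * α * g α‖ ≤ Real.exp ((‖z‖ + 1) * R) * R * ‖g α‖ := by
    filter_upwards [hR] with α hα w hw_mem
    have hw : ‖w‖ ≤ ‖z‖ + 1 := by
      have := norm_le_norm_add_norm_sub' w z
      rw [Metric.mem_ball, dist_eq_norm] at hw_mem
      linarith
    have hR0 : 0 ≤ R := (abs_nonneg α).trans hα
    rw [norm_mul, norm_mul, Complex.norm_real, Real.norm_eq_abs]
    gcongr
    exact (norm_cexp_mul_ofReal_le w hα).trans (by gcongr)
  have hderiv : ∀ᵐ (α : ℝ) ∂ν, ∀ w ∈ Metric.ball z 1, HasDerivAt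
      (fun w : ℂ => Complex.exp (w * α) * g α) (Complex.exp (w * α) * α * g α) w :=
    Filter.Eventually.of_forall fun α w _ => by
      simpa using (((hasDerivAt_id w).mul_const (α : ℂ)).cexp).mul_const (g α)
  have hmeas : AEStronglyMeasurable (fun α : ℝ => Complex.exp (z * α) * α * g α) ν :=
    (by fun_prop : Continuous fun α : ℝ => Complex.exp (z * α) * α).aestronglyMeasurable.mul
      hg.aestronglyMeasurable
  exact (hasDerivAt_integral_of_dominated_loc_of_deriv_le (Metric.ball_mem_nhds z one_pos)
    (Filter.Eventually.of_forall fun w => (integrable_cexp_mul_ofReal_mul hg hR w).aestronglyMeasurable)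
    (integrable_cexp_mul_ofReal_mul hg hR z) hmeas hbound (hg.norm.const_mul _)
    hderiv).2.differentiableAt

lemma exp_neg_abs_mul_cos_le_re_cexp {z : ℂ} (hz : |z.im| < π) {α : ℝ} (hα : α ∈ Icc 0 1) :
    Real.exp (-|z.re|) * Real.cos (z.im / 2) ≤
      (Complex.exp (z * α - (z.im / 2 : ℝ) * Complex.I)).re := by
  obtain ⟨hα0, hα1⟩ := hα
  have hcos : 0 ≤ Real.cos (|z.im| / 2) :=
    Real.cos_nonneg_of_mem_Icc ⟨by linarith [abs_nonneg z.im, pi_pos], by linarith⟩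
  have hphase : |z.im * α - z.im / 2| ≤ |z.im| / 2 := by
    rw [show z.im * α - z.im / 2 = z.im * (α - 1 / 2) by ring, abs_mul]
    have hhalf : |α - 1 / 2| ≤ 1 / 2 := abs_le.2 ⟨by linarith, by linarith⟩
    linarith [mul_le_mul_of_nonneg_left hhalf (abs_nonneg z.im)]
  rw [Complex.exp_re]
  simp only [Complex.sub_re, Complex.sub_im, Complex.mul_re, Complex.mul_im, Complex.ofReal_re,
    Complex.ofReal_im, Complex.I_re, Complex.I_im, mul_zero, mul_one, sub_zero, zero_add,
    add_zero]
  rw [← Real.cos_abs (z.im / 2), abs_div, abs_two, ← Real.cos_abs (z.im * α - z.im / 2)]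
  gcongr
  · nlinarith [neg_abs_le z.re, abs_nonneg z.re]
  · exact Real.cos_le_cos_of_nonneg_of_le_pi (abs_nonneg _) (by linarith [pi_pos]) hphase

theorem integral_cexp_mul_ofReal_ne_zero {g : ℝ → ℝ} (hg : Integrable g ν) (hg0 : 0 ≤ᵐ[ν] g)
    (hg_ne : ¬ g =ᵐ[ν] 0) (hsupp : ∀ᵐ α ∂ν, α ∈ Icc 0 1) {z : ℂ} (hz : |z.im| < π) :
    ∫ α, Complex.exp (z * α) * g α ∂ν ≠ 0 := by
  set c := Real.exp (-|z.re|) * Real.cos (z.im / 2)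
  set e := Complex.exp (-((z.im / 2 : ℝ) * Complex.I))
  have hc : 0 < c := mul_pos (Real.exp_pos _) <| Real.cos_pos_of_mem_Ioo
    ⟨by linarith [neg_abs_le z.im, abs_nonneg z.im], by linarith [le_abs_self z.im]⟩
  have hg_pos : 0 < ∫ α, g α ∂ν := (integral_nonneg_of_ae hg0).lt_of_ne fun h =>
    hg_ne ((integral_eq_zero_iff_of_nonneg_ae hg0 hg).1 h.symm)
  have hint : Integrable (fun α : ℝ => e * (Complex.exp (z * α) * g α)) ν :=
    (integrable_cexp_mul_ofReal_mul hg.ofReal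
      (hsupp.mono fun α hα => abs_le.2 ⟨by linarith [hα.1], hα.2⟩) z).const_mul e
  have hrot : 0 < (e * ∫ α, Complex.exp (z * α) * g α ∂ν).re :=
    calc 0 < c * ∫ α, g α ∂ν := mul_pos hc hg_pos
      _ = ∫ α, c * g α ∂ν := (integral_const_mul c _).symm
      _ ≤ ∫ α, (e * (Complex.exp (z * α) * g α)).re ∂ν := by
        refine integral_mono_ae (hg.const_mul c) hint.re ?_
        filter_upwards [hsupp, hg0] with α hα hgα
        rw [← mul_assoc, ← Complex.exp_add, neg_add_eq_sub, Complex.re_mul_ofReal]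
        exact mul_le_mul_of_nonneg_right (exp_neg_abs_mul_cos_le_re_cexp hz hα) hgα
      _ = (e * ∫ α, Complex.exp (z * α) * g α ∂ν).re := by
        rw [← integral_const_mul]
        exact integral_re hint
  intro h
  rw [h, mul_zero, Complex.zero_re] at hrot
  exact hrot.false

end ExpIntegral

lemma abs_arg_lt_pi_of_mem_slitPlane {p : ℂ} (hp : p ∈ Complex.slitPlane) : |p.arg| < π :=
  abs_lt.2 ⟨Complex.neg_pi_lt_arg p,
    (Complex.arg_le_pi p).lt_of_ne (Complex.slitPlane_arg_ne_pi hp)⟩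

/-- The function `p ↦ ∫₀¹ p^α μ(α) dα` (principal branch of the complex power)
is analytic on `ℂ \ (-∞, 0]` and does not vanish there; consequently
`F(p) := 1 / ∫₀¹ p^α μ(α) dα` is analytic on `ℂ \ (-∞, 0]`. -/
theorem stmt_3 (μ : ℝ → ℝ)
    (hμ_int : IntegrableOn μ (Ioo 0 1))
    (hμ_nonneg : ∀ α ∈ Ioo (0:ℝ) 1, 0 ≤ μ α)
    (hμ_ne : ¬ (∀ᵐ α ∂(volume.restrict (Ioo (0:ℝ) 1)), μ α = 0)) :
    AnalyticOnNhd ℂ (fun p : ℂ => ∫ α in Ioo (0:ℝ) 1, p ^ (α : ℂ) * (μ α : ℂ))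
      Complex.slitPlane ∧
    (∀ p ∈ Complex.slitPlane, (∫ α in Ioo (0:ℝ) 1, p ^ (α : ℂ) * (μ α : ℂ)) ≠ 0) ∧
    AnalyticOnNhd ℂ (fun p : ℂ => 1 / ∫ α in Ioo (0:ℝ) 1, p ^ (α : ℂ) * (μ α : ℂ))
      Complex.slitPlane := by
  set I := fun z : ℂ => ∫ α in Ioo (0:ℝ) 1, Complex.exp (z * α) * (μ α : ℂ)
  have hsupp : ∀ᵐ α ∂(volume.restrict (Ioo (0:ℝ) 1)), α ∈ Icc 0 1 :=
    (ae_restrict_mem measurableSet_Ioo).mono fun α hα => Ioo_subset_Icc_self hα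
  have hI_log : ∀ p ∈ Complex.slitPlane,
      I (Complex.log p) = ∫ α in Ioo (0:ℝ) 1, p ^ (α : ℂ) * (μ α : ℂ) :=
    fun p hp => by simp [I, Complex.cpow_def_of_ne_zero (Complex.slitPlane_ne_zero hp)]
  have hanalytic : AnalyticOnNhd ℂ (fun p : ℂ => ∫ α in Ioo (0:ℝ) 1, p ^ (α : ℂ) * (μ α : ℂ))
      Complex.slitPlane := by
    refine AnalyticOnNhd.congr (f := I ∘ Complex.log) Complex.isOpen_slitPlane
      (fun p hp => ?_) hI_log
    refine (Differentiable.analyticAt ?_ _).comp (analyticAt_clog hp)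
    exact differentiable_integral_cexp_mul_ofReal_mul hμ_int.ofReal
      (hsupp.mono fun α hα => abs_le.2 ⟨by linarith [hα.1], hα.2⟩)
  have hne : ∀ p ∈ Complex.slitPlane,
      (∫ α in Ioo (0:ℝ) 1, p ^ (α : ℂ) * (μ α : ℂ)) ≠ 0 := fun p hp => by
    rw [← hI_log p hp]
    refine integral_cexp_mul_ofReal_ne_zero hμ_int ?_ hμ_ne hsupp ?_
    · exact (ae_restrict_mem measurableSet_Ioo).mono hμ_nonneg
    · rw [Complex.log_im]
      exact abs_arg_lt_pi_of_mem_slitPlane hp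
  exact ⟨hanalytic, hne, analyticOnNhd_const.div hanalytic hne⟩
end

section
/- Let c̃ := min{sin(γπ/2), sin(γπ), √2/2} · ((1-γ)/2) · c_μ. Then for every η ∈ (0, π/2) and every p ∈ ℂ \ (-∞,0] with |arg p| ≤ π - η, writing r = |p|, one has |∫₀¹ p^α μ(α) dα| ≥ c̃ · r^{1-γ} if r ≤ 1, and |∫₀¹ p^α μ(α) dα| ≥ c̃ · r^{γ} if r > 1. -/
/-!
Rotate the integral by a unit complex number. With `t = |arg p|` and `m = max (t - π/2) 0`,
multiplying by `exp (∓ i m)` (sign of `arg p`) turns the real part of `p ^ α` into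
`|p| ^ α * cos (α t - m)`. For `t ≤ π` the angle `α t - m` stays in `[-π/2, π/2]` when
`α ∈ [0, 1]`, and for `α ∈ [γ, 1 - γ]` it stays at distance at least `min (γπ/2) (γπ)` from
`±π/2`. So `|∫ p^α μ| ≥ ∫ Re(…) ≥ min (sin (γπ/2)) (sin (γπ)) · min_{[γ, 1-γ]} |p|^α · ∫_γ^{1-γ} μ`,
and that minimum of `|p| ^ α` is `|p| ^ (1 - γ)` for `|p| ≤ 1` and `|p| ^ γ` for `|p| > 1`.
-/

open MeasureTheory Real Set

lemma cos_mul_sub_max_nonneg {t α : ℝ} (ht0 : 0 ≤ t) (htπ : t ≤ π) (hα : α ∈ Icc (0 : ℝ) 1) :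
    0 ≤ cos (α * t - max (t - π / 2) 0) := by
  have hαt : α * t ≤ t := mul_le_of_le_one_left ht0 hα.2
  have hαt0 : 0 ≤ α * t := mul_nonneg hα.1 ht0
  apply cos_nonneg_of_mem_Icc
  constructor <;> cases max_cases (t - π / 2) 0 <;> linarith

lemma min_sin_le_cos_mul_sub_max {γ t α : ℝ} (hγ : 0 ≤ γ) (ht0 : 0 ≤ t) (htπ : t ≤ π)
    (hα : α ∈ Icc γ (1 - γ)) :
    min (sin (γ * π / 2)) (sin (γ * π)) ≤ cos (α * t - max (t - π / 2) 0) := by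
  have hα0 : 0 ≤ α := hγ.trans hα.1
  have hγ1 : γ ≤ 1 - γ := hα.1.trans hα.2
  rcases le_total t (π / 2) with ht | ht
  · rw [max_eq_right (by linarith), sub_zero]
    calc min (sin (γ * π / 2)) (sin (γ * π)) ≤ sin (γ * π / 2) := min_le_left _ _
      _ = cos ((1 - γ) * (π / 2)) := by rw [← cos_pi_div_two_sub]; ring_nf
      _ ≤ cos (α * t) :=
        cos_le_cos_of_nonneg_of_le_pi (mul_nonneg hα0 ht0) (by nlinarith [pi_pos])
          (mul_le_mul hα.2 ht ht0 (by linarith))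
  · rw [max_eq_left (by linarith), show α * t - (t - π / 2) = π / 2 - (1 - α) * t by ring,
      cos_pi_div_two_sub]
    have hlow : γ * π / 2 ≤ (1 - α) * t := by nlinarith [hα.2]
    have hhigh : (1 - α) * t ≤ (1 - γ) * π :=
      mul_le_mul (by linarith [hα.1]) htπ ht0 (by linarith)
    rcases le_total ((1 - α) * t) (π / 2) with hx | hx
    · exact (min_le_left _ _).trans
        (sin_le_sin_of_le_of_le_pi_div_two (by nlinarith) hx hlow)
    · rw [← sin_pi_sub ((1 - α) * t)]
      exact (min_le_right _ _).trans
        (sin_le_sin_of_le_of_le_pi_div_two (by nlinarith) (by linarith) (by linarith))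

lemma cos_mul_sub_ite_abs (α θ m : ℝ) :
    cos (α * θ - if 0 ≤ θ then m else -m) = cos (α * |θ| - m) := by
  split_ifs with h
  · rw [abs_of_nonneg h]
  · rw [abs_of_neg (not_le.mp h), ← cos_neg]
    ring_nf

lemma re_exp_mul_I_mul_cpow {p : ℂ} (hp : p ≠ 0) (φ α : ℝ) :
    (Complex.exp (↑(-φ) * Complex.I) * p ^ (α : ℂ)).re = ‖p‖ ^ α * cos (α * p.arg - φ) := by
  rw [Complex.cpow_def_of_ne_zero hp, ← Complex.exp_add, Complex.exp_re,
    rpow_def_of_pos (norm_pos_iff.mpr hp)]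
  simp only [Complex.add_re, Complex.add_im, Complex.mul_re, Complex.mul_im, Complex.ofReal_re,
    Complex.ofReal_im, Complex.I_re, Complex.I_im, Complex.log_re, Complex.log_im]
  ring_nf

lemma setIntegral_re_mul_le_norm {X : Type*} [MeasurableSpace X] {ν : Measure X} {s : Set X}
    {f : X → ℂ} (hf : IntegrableOn f s ν) (u : ℂ) :
    ∫ x in s, (u * f x).re ∂ν ≤ ‖u‖ * ‖∫ x in s, f x ∂ν‖ := by
  rw [← norm_mul, ← integral_const_mul]
  exact (integral_re (hf.const_mul u)).trans_le (Complex.re_le_norm _)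

lemma integrableOn_cpow_mul_Ioo {p : ℂ} (hp : p ≠ 0) {μ : ℝ → ℝ}
    (hμ : IntegrableOn μ (Ioo 0 1)) :
    IntegrableOn (fun α : ℝ => p ^ (α : ℂ) * (μ α : ℂ)) (Ioo 0 1) :=
  IntegrableOn.continuousOn_mul_of_subset
    (Complex.continuous_ofReal.const_cpow (Or.inl hp)).continuousOn
    hμ.ofReal isCompact_Icc measurableSet_Ioo Ioo_subset_Icc_self

theorem min_sin_mul_rpow_mul_setIntegral_le_norm_integral_cpow_mul {μ : ℝ → ℝ}
    (hμ_int : IntegrableOn μ (Ioo 0 1)) (hμ_nonneg : ∀ α ∈ Ioo (0 : ℝ) 1, 0 ≤ μ α)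
    {γ : ℝ} (hγ : 0 ≤ γ) {p : ℂ} (hp : p ≠ 0) {e : ℝ}
    (he : ∀ α ∈ Icc γ (1 - γ), ‖p‖ ^ e ≤ ‖p‖ ^ α) :
    min (sin (γ * π / 2)) (sin (γ * π)) * ‖p‖ ^ e * ∫ α in Ioo γ (1 - γ), μ α ≤
      ‖∫ α in Ioo (0 : ℝ) 1, p ^ (α : ℂ) * (μ α : ℂ)‖ := by
  set t := |p.arg|
  set m := max (t - π / 2) 0
  set u := Complex.exp (↑(-if 0 ≤ p.arg then m else -m) * Complex.I)
  set g := fun α : ℝ => ‖p‖ ^ α * cos (α * t - m) * μ α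
  have hf := integrableOn_cpow_mul_Ioo hp hμ_int
  have hre : ∀ α : ℝ, (u * (p ^ (α : ℂ) * (μ α : ℂ))).re = g α := fun α => by
    rw [← mul_assoc, Complex.re_mul_ofReal, re_exp_mul_I_mul_cpow hp, cos_mul_sub_ite_abs]
  have hg : IntegrableOn g (Ioo 0 1) :=
    (hf.const_mul u).re.congr (Filter.Eventually.of_forall hre)
  have ht0 : 0 ≤ t := abs_nonneg _
  have htπ : t ≤ π := Complex.abs_arg_le_pi p
  have hsub : Ioo γ (1 - γ) ⊆ Ioo (0 : ℝ) 1 := Ioo_subset_Ioo hγ (by linarith)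
  have hg_nonneg : ∀ α ∈ Ioo (0 : ℝ) 1, 0 ≤ g α := fun α hα =>
    mul_nonneg (mul_nonneg (by positivity)
      (cos_mul_sub_max_nonneg ht0 htπ (Ioo_subset_Icc_self hα))) (hμ_nonneg α hα)
  have hg_ge : ∀ α ∈ Ioo γ (1 - γ),
      min (sin (γ * π / 2)) (sin (γ * π)) * ‖p‖ ^ e * μ α ≤ g α := fun α hα =>
    mul_le_mul_of_nonneg_right
      ((mul_le_mul (min_sin_le_cos_mul_sub_max hγ ht0 htπ (Ioo_subset_Icc_self hα))
        (he α (Ioo_subset_Icc_self hα)) (by positivity)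
        (cos_mul_sub_max_nonneg ht0 htπ (Ioo_subset_Icc_self (hsub hα)))).trans_eq
        (mul_comm _ _))
      (hμ_nonneg α (hsub hα))
  calc min (sin (γ * π / 2)) (sin (γ * π)) * ‖p‖ ^ e * ∫ α in Ioo γ (1 - γ), μ α
      = ∫ α in Ioo γ (1 - γ), min (sin (γ * π / 2)) (sin (γ * π)) * ‖p‖ ^ e * μ α :=
        (integral_const_mul _ _).symm
    _ ≤ ∫ α in Ioo γ (1 - γ), g α :=
        setIntegral_mono_on ((hμ_int.mono_set hsub).const_mul _) (hg.mono_set hsub)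
          measurableSet_Ioo hg_ge
    _ ≤ ∫ α in Ioo 0 1, g α :=
        setIntegral_mono_set hg (ae_restrict_of_forall_mem measurableSet_Ioo hg_nonneg)
          hsub.eventuallyLE
    _ = ∫ α in Ioo (0 : ℝ) 1, (u * (p ^ (α : ℂ) * (μ α : ℂ))).re := by simp only [hre]
    _ ≤ ‖u‖ * ‖∫ α in Ioo (0 : ℝ) 1, p ^ (α : ℂ) * (μ α : ℂ)‖ :=
        setIntegral_re_mul_le_norm hf u
    _ = ‖∫ α in Ioo (0 : ℝ) 1, p ^ (α : ℂ) * (μ α : ℂ)‖ := by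
        rw [Complex.norm_exp_ofReal_mul_I, one_mul]

theorem stmt_4_general (μ : ℝ → ℝ)
    (hμ_int : IntegrableOn μ (Ioo 0 1))
    (hμ_nonneg : ∀ α ∈ Ioo (0:ℝ) 1, 0 ≤ μ α)
    (γ : ℝ) (hγ : γ ∈ Ioo (0:ℝ) (1/2))
    (hγμ : (∫ α in Ioo γ (1 - γ), μ α) = ((1 - γ) / 2) * ∫ α in Ioo (0:ℝ) 1, μ α) :
    ∀ η ∈ Ioo (0:ℝ) (π/2), ∀ p : ℂ, p ∈ Complex.slitPlane → |p.arg| ≤ π - η →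
      (‖p‖ ≤ 1 →
        (min (Real.sin (γ * π / 2)) (min (Real.sin (γ * π)) (Real.sqrt 2 / 2)) *
            ((1 - γ) / 2) * (∫ α in Ioo (0:ℝ) 1, μ α)) * ‖p‖ ^ (1 - γ) ≤
          ‖∫ α in Ioo (0:ℝ) 1, p ^ (α : ℂ) * (μ α : ℂ)‖) ∧
      (1 < ‖p‖ →
        (min (Real.sin (γ * π / 2)) (min (Real.sin (γ * π)) (Real.sqrt 2 / 2)) *
            ((1 - γ) / 2) * (∫ α in Ioo (0:ℝ) 1, μ α)) * ‖p‖ ^ γ ≤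
          ‖∫ α in Ioo (0:ℝ) 1, p ^ (α : ℂ) * (μ α : ℂ)‖) := by
  intro _ _ p hp _
  have hp0 : p ≠ 0 := Complex.slitPlane_ne_zero hp
  have hr0 : 0 < ‖p‖ := norm_pos_iff.mpr hp0
  have hmass : 0 ≤ ∫ α in Ioo γ (1 - γ), μ α := setIntegral_nonneg measurableSet_Ioo
    fun α hα => hμ_nonneg α (Ioo_subset_Ioo hγ.1.le (by linarith [hγ.1]) hα)
  have key : ∀ e : ℝ, (∀ α ∈ Icc γ (1 - γ), ‖p‖ ^ e ≤ ‖p‖ ^ α) →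
      (min (sin (γ * π / 2)) (min (sin (γ * π)) (√2 / 2)) *
        ((1 - γ) / 2) * (∫ α in Ioo (0:ℝ) 1, μ α)) * ‖p‖ ^ e ≤
      ‖∫ α in Ioo (0:ℝ) 1, p ^ (α : ℂ) * (μ α : ℂ)‖ := fun e he =>
    calc _ = min (sin (γ * π / 2)) (min (sin (γ * π)) (√2 / 2)) * ‖p‖ ^ e *
          ∫ α in Ioo γ (1 - γ), μ α := by rw [hγμ]; ring
      _ ≤ min (sin (γ * π / 2)) (sin (γ * π)) * ‖p‖ ^ e * ∫ α in Ioo γ (1 - γ), μ α :=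
          mul_le_mul_of_nonneg_right (mul_le_mul_of_nonneg_right
            (min_le_min_left _ (min_le_left _ _)) (by positivity)) hmass
      _ ≤ _ := min_sin_mul_rpow_mul_setIntegral_le_norm_integral_cpow_mul hμ_int hμ_nonneg
          hγ.1.le hp0 he
  exact ⟨fun hr1 => key _ fun α hα => rpow_le_rpow_of_exponent_ge hr0 hr1 hα.2,
    fun hr1 => key _ fun α hα => rpow_le_rpow_of_exponent_le hr1.le hα.1⟩

/-- With `c̃ := min{sin(γπ/2), sin(γπ), √2/2} · ((1-γ)/2) · c_μ`, for every
`η ∈ (0, π/2)` and every `p ∈ ℂ \ (-∞,0]` with `|arg p| ≤ π - η`, writing `r = |p|`,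
one has `|∫₀¹ p^α μ(α) dα| ≥ c̃ r^{1-γ}` if `r ≤ 1` and `≥ c̃ r^γ` if `r > 1`. -/
theorem stmt_4 (μ : ℝ → ℝ)
    (hμ_int : IntegrableOn μ (Ioo 0 1))
    (hμ_nonneg : ∀ α ∈ Ioo (0:ℝ) 1, 0 ≤ μ α)
    (hμ_ne : ¬ (∀ᵐ α ∂(volume.restrict (Ioo (0:ℝ) 1)), μ α = 0))
    (hcμ : 0 < ∫ α in Ioo (0:ℝ) 1, μ α)
    (γ : ℝ) (hγ : γ ∈ Ioo (0:ℝ) (1/2))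
    (hγμ : (∫ α in Ioo γ (1 - γ), μ α) = ((1 - γ) / 2) * ∫ α in Ioo (0:ℝ) 1, μ α) :
    ∀ η ∈ Ioo (0:ℝ) (π/2), ∀ p : ℂ, p ∈ Complex.slitPlane → |p.arg| ≤ π - η →
      (‖p‖ ≤ 1 →
        (min (Real.sin (γ * π / 2)) (min (Real.sin (γ * π)) (Real.sqrt 2 / 2)) *
            ((1 - γ) / 2) * (∫ α in Ioo (0:ℝ) 1, μ α)) * ‖p‖ ^ (1 - γ) ≤
          ‖∫ α in Ioo (0:ℝ) 1, p ^ (α : ℂ) * (μ α : ℂ)‖) ∧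
      (1 < ‖p‖ →
        (min (Real.sin (γ * π / 2)) (min (Real.sin (γ * π)) (Real.sqrt 2 / 2)) *
            ((1 - γ) / 2) * (∫ α in Ioo (0:ℝ) 1, μ α)) * ‖p‖ ^ γ ≤
          ‖∫ α in Ioo (0:ℝ) 1, p ^ (α : ℂ) * (μ α : ℂ)‖) :=
  stmt_4_general μ hμ_int hμ_nonneg γ hγ hγμ
end

section
/- For every t > 0, the kernel g satisfies g(t) ≤ (4 Γ(γ) √π / (π² c_μ)) · (√π · t^{γ-1} + Γ(γ) · t^{-γ}); in particular g(t) ≤ c · max{t^{γ-1}, t^{-γ}} for a constant c depending only on μ. -/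
open MeasureTheory Real Set

/-!
Since `S r ^ 2 + C r ^ 2 ≥ S r ^ 2`, the integrand is at most `exp (-r t) / S r`. On `[γ, 1 - γ]`
we have `sin (π α) ≥ sin (π γ)` and `r ^ α ≥ min (r ^ γ) (r ^ (1 - γ))`, so the choice of `γ` gives
`S r ≥ sin (π γ) (1 - γ) c_μ / 2 · min (r ^ γ) (r ^ (1 - γ))`. Bounding the inverse of the minimum
by `r ^ (-γ) + r ^ (γ - 1)` and integrating against `exp (-r t)` produces
`Γ(1 - γ) t ^ (γ - 1) + Γ(γ) t ^ (-γ)`; the constant then comes from the reflection formula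
`Γ(γ) Γ(1 - γ) = π / sin (π γ)`, from `Γ(1 - γ) ≤ Γ(1/2) = √π` and from `1 / (1 - γ) ≤ 2`.
-/

lemma Real.Gamma_le_sqrt_pi {x : ℝ} (h₁ : 1 / 2 ≤ x) (h₂ : x ≤ 1) : Gamma x ≤ √π := by
  rw [← Gamma_one_half_eq]
  exact Gamma_strictAntiOn_Ioc.antitoneOn ⟨by norm_num, by norm_num⟩ ⟨by linarith, h₂⟩ h₁

lemma sin_pi_mul_le_sin_pi_mul {γ α : ℝ} (hγ : 0 ≤ γ) (h₁ : γ ≤ α) (h₂ : α ≤ 1 - γ) :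
    sin (π * γ) ≤ sin (π * α) := by
  wlog hα : α ≤ 1 / 2 generalizing α
  · have := this (α := 1 - α) (by linarith) (by linarith) (by linarith)
    rwa [mul_one_sub, sin_pi_sub] at this
  have hπ := pi_pos
  exact strictMonoOn_sin.monotoneOn ⟨by nlinarith, by nlinarith⟩ ⟨by nlinarith, by nlinarith⟩
    (by gcongr)

lemma min_rpow_le_rpow {r a b α : ℝ} (hr : 0 < r) (ha : a ≤ α) (hb : α ≤ b) :
    min (r ^ a) (r ^ b) ≤ r ^ α := by
  rcases le_total 1 r with h | h
  · exact (min_le_left _ _).trans (rpow_le_rpow_of_exponent_le h ha)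
  · exact (min_le_right _ _).trans (rpow_le_rpow_of_exponent_ge hr h hb)

lemma inv_min_le_inv_add_inv {a b : ℝ} (ha : 0 ≤ a) (hb : 0 ≤ b) :
    (min a b)⁻¹ ≤ a⁻¹ + b⁻¹ := by
  rcases min_choice a b with h | h <;> rw [h]
  · exact le_add_of_nonneg_right (inv_nonneg.mpr hb)
  · exact le_add_of_nonneg_left (inv_nonneg.mpr ha)

lemma sin_mul_min_rpow_mul_setIntegral_le {μ : ℝ → ℝ} (hμ_int : IntegrableOn μ (Ioo 0 1))
    (hμ_nonneg : ∀ α ∈ Ioo (0 : ℝ) 1, 0 ≤ μ α) {γ r : ℝ} (hγ : 0 ≤ γ) (hr : 0 < r) :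
    sin (π * γ) * min (r ^ γ) (r ^ (1 - γ)) * ∫ α in Ioo γ (1 - γ), μ α
      ≤ ∫ α in Ioo 0 1, sin (π * α) * r ^ α * μ α := by
  have hπ := pi_pos
  have hsub : Ioo γ (1 - γ) ⊆ Ioo 0 1 := Ioo_subset_Ioo hγ (by linarith)
  have hint : IntegrableOn (fun α => sin (π * α) * r ^ α * μ α) (Ioo 0 1) :=
    hμ_int.continuousOn_mul_of_subset
      (by have := continuous_const_rpow hr.ne'; fun_prop) isCompact_Icc measurableSet_Ioo
      Ioo_subset_Icc_self
  rw [← integral_const_mul]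
  calc ∫ α in Ioo γ (1 - γ), sin (π * γ) * min (r ^ γ) (r ^ (1 - γ)) * μ α
      ≤ ∫ α in Ioo γ (1 - γ), sin (π * α) * r ^ α * μ α := by
        refine setIntegral_mono_on ((hμ_int.mono_set hsub).const_mul _) (hint.mono_set hsub)
          measurableSet_Ioo fun α hα => ?_
        have hsin₀ : 0 ≤ sin (π * γ) :=
          sin_nonneg_of_nonneg_of_le_pi (by positivity) (by nlinarith [hα.1, hα.2])
        have hsin := sin_pi_mul_le_sin_pi_mul hγ hα.1.le hα.2.le
        have hmin := min_rpow_le_rpow hr hα.1.le hα.2.le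
        have := hμ_nonneg α (hsub hα)
        gcongr
        exact hsin₀.trans hsin
    _ ≤ ∫ α in Ioo 0 1, sin (π * α) * r ^ α * μ α := by
        refine setIntegral_mono_set hint ?_ hsub.eventuallyLE
        filter_upwards [ae_restrict_mem measurableSet_Ioo] with α hα
        have : 0 ≤ sin (π * α) :=
          sin_nonneg_of_nonneg_of_le_pi (by nlinarith [hα.1]) (by nlinarith [hα.2])
        have := hμ_nonneg α hα
        positivity

lemma integrableOn_rpow_sub_one_mul_exp_neg_mul {a t : ℝ} (ha : 0 < a) (ht : 0 < t) :
    IntegrableOn (fun r : ℝ => r ^ (a - 1) * exp (-r * t)) (Ioi 0) := by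
  simpa only [rpow_one, neg_mul, mul_comm t] using
    integrableOn_rpow_mul_exp_neg_mul_rpow (by linarith : -1 < a - 1) one_pos ht

lemma integral_rpow_sub_one_mul_exp_neg_mul {a t : ℝ} (ha : 0 < a) (ht : 0 < t) :
    ∫ r in Ioi 0, r ^ (a - 1) * exp (-r * t) = Gamma a * t ^ (-a) := by
  simp_rw [neg_mul, mul_comm _ t]
  rw [integral_rpow_mul_exp_neg_mul_Ioi ha ht, one_div, inv_rpow ht.le, rpow_neg ht.le, mul_comm]

lemma div_sq_add_sq_le_inv {s c : ℝ} (hs : 0 < s) : s / (s ^ 2 + c ^ 2) ≤ s⁻¹ := by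
  rw [div_le_iff₀ (by positivity), inv_mul_eq_div, le_div_iff₀ hs]
  nlinarith [sq_nonneg c]

lemma setIntegral_exp_mul_div_le {S C : ℝ → ℝ} {B γ t : ℝ} (hB : 0 < B) (hγ₀ : 0 < γ)
    (hγ₁ : γ < 1) (ht : 0 < t) (hS : ∀ r, 0 < r → B * min (r ^ γ) (r ^ (1 - γ)) ≤ S r) :
    ∫ r in Ioi 0, exp (-r * t) * S r / (S r ^ 2 + C r ^ 2)
      ≤ B⁻¹ * (Gamma (1 - γ) * t ^ (γ - 1) + Gamma γ * t ^ (-γ)) := by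
  have hint₁ := integrableOn_rpow_sub_one_mul_exp_neg_mul (by linarith : 0 < 1 - γ) ht
  have hint₂ := integrableOn_rpow_sub_one_mul_exp_neg_mul hγ₀ ht
  have hS_pos : ∀ r, 0 < r → 0 < S r := fun r hr =>
    (mul_pos hB (lt_min (by positivity) (by positivity))).trans_le (hS r hr)
  have hpt : ∀ r ∈ Ioi (0 : ℝ), exp (-r * t) * S r / (S r ^ 2 + C r ^ 2) ≤
      B⁻¹ * (r ^ (1 - γ - 1) * exp (-r * t) + r ^ (γ - 1) * exp (-r * t)) := by
    intro r (hr : 0 < r)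
    have hSr := hS_pos r hr
    calc exp (-r * t) * S r / (S r ^ 2 + C r ^ 2)
        ≤ exp (-r * t) * (S r)⁻¹ := by
          rw [mul_div_assoc]; gcongr; exact div_sq_add_sq_le_inv hSr
      _ ≤ exp (-r * t) * (B⁻¹ * (min (r ^ γ) (r ^ (1 - γ)))⁻¹) := by
          rw [← mul_inv]; gcongr; exact hS r hr
      _ ≤ exp (-r * t) * (B⁻¹ * ((r ^ γ)⁻¹ + (r ^ (1 - γ))⁻¹)) := by
          gcongr; exact inv_min_le_inv_add_inv (by positivity) (by positivity)
      _ = B⁻¹ * (r ^ (1 - γ - 1) * exp (-r * t) + r ^ (γ - 1) * exp (-r * t)) := by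
          rw [← rpow_neg hr.le, ← rpow_neg hr.le, show 1 - γ - 1 = -γ by ring,
            show -(1 - γ) = γ - 1 by ring]
          ring
  calc ∫ r in Ioi 0, exp (-r * t) * S r / (S r ^ 2 + C r ^ 2)
      ≤ ∫ r in Ioi 0, B⁻¹ * (r ^ (1 - γ - 1) * exp (-r * t) + r ^ (γ - 1) * exp (-r * t)) := by
        refine integral_mono_of_nonneg ?_ ((hint₁.add hint₂).const_mul _) ?_
        · filter_upwards [ae_restrict_mem measurableSet_Ioi] with r (hr : 0 < r)
          have := hS_pos r hr
          positivity
        · exact (ae_restrict_iff' measurableSet_Ioi).mpr (ae_of_all _ hpt)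
    _ = B⁻¹ * (Gamma (1 - γ) * t ^ (γ - 1) + Gamma γ * t ^ (-γ)) := by
        rw [integral_const_mul, integral_add hint₁ hint₂,
          integral_rpow_sub_one_mul_exp_neg_mul (by linarith) ht,
          integral_rpow_sub_one_mul_exp_neg_mul hγ₀ ht, neg_sub]

lemma one_div_pi_mul_inv_sin_mul_le {γ c T₁ T₂ : ℝ} (hγ₀ : 0 < γ) (hγ₁ : γ < 1 / 2) (hc : 0 < c)
    (hT₁ : 0 ≤ T₁) (hT₂ : 0 ≤ T₂) :
    1 / π * ((sin (π * γ) * ((1 - γ) / 2 * c))⁻¹ * (Gamma (1 - γ) * T₁ + Gamma γ * T₂))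
      ≤ 4 * Gamma γ * √π / (π ^ 2 * c) * (√π * T₁ + Gamma γ * T₂) := by
  have hπ := pi_pos
  have hΓ₁ : 0 < Gamma (1 - γ) := Gamma_pos_of_pos (by linarith)
  have hΓ₁_le : Gamma (1 - γ) ≤ √π := Gamma_le_sqrt_pi (by linarith) (by linarith)
  have hsin : sin (π * γ) = π / (Gamma γ * Gamma (1 - γ)) := by
    rw [Gamma_mul_Gamma_one_sub, div_div_cancel₀ hπ.ne']
  calc 1 / π * ((sin (π * γ) * ((1 - γ) / 2 * c))⁻¹ * (Gamma (1 - γ) * T₁ + Gamma γ * T₂))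
      = Gamma γ / (π ^ 2 * c) * (2 / (1 - γ) * Gamma (1 - γ)) *
          (Gamma (1 - γ) * T₁ + Gamma γ * T₂) := by
        rw [hsin]
        field_simp
    _ ≤ Gamma γ / (π ^ 2 * c) * (4 * √π) * (√π * T₁ + Gamma γ * T₂) := by
        have h : 2 / (1 - γ) ≤ 4 := by rw [div_le_iff₀ (by linarith)]; linarith
        gcongr
    _ = 4 * Gamma γ * √π / (π ^ 2 * c) * (√π * T₁ + Gamma γ * T₂) := by ring

theorem stmt_6_general (μ : ℝ → ℝ)
    (hμ_int : IntegrableOn μ (Ioo 0 1))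
    (hμ_nonneg : ∀ α ∈ Ioo (0:ℝ) 1, 0 ≤ μ α)
    (hcμ : 0 < ∫ α in Ioo (0:ℝ) 1, μ α)
    (γ : ℝ) (hγ : γ ∈ Ioo (0:ℝ) (1/2))
    (hγμ : (∫ α in Ioo γ (1 - γ), μ α) = ((1 - γ) / 2) * ∫ α in Ioo (0:ℝ) 1, μ α)
    (S C g : ℝ → ℝ)
    (hS : ∀ r : ℝ, S r = ∫ α in Ioo (0:ℝ) 1, Real.sin (π * α) * r ^ α * μ α)
    (hg : ∀ t : ℝ, 0 < t →
      g t = (1/π) * ∫ r in Ioi (0:ℝ), Real.exp (-r * t) * S r / ((S r)^2 + (C r)^2)) :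
    (∀ t : ℝ, 0 < t →
      g t ≤ (4 * Real.Gamma γ * Real.sqrt π / (π^2 * ∫ α in Ioo (0:ℝ) 1, μ α)) *
        (Real.sqrt π * t ^ (γ - 1) + Real.Gamma γ * t ^ (-γ))) ∧
    (∃ c : ℝ, 0 < c ∧ ∀ t : ℝ, 0 < t → g t ≤ c * max (t ^ (γ - 1)) (t ^ (-γ))) := by
  obtain ⟨hγ₀, hγ₁⟩ := hγ
  set cμ := ∫ α in Ioo (0:ℝ) 1, μ α
  set A := 4 * Gamma γ * √π / (π ^ 2 * cμ)
  have hB : 0 < sin (π * γ) * ((1 - γ) / 2 * cμ) :=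
    mul_pos (sin_pos_of_pos_of_lt_pi (by positivity) (by nlinarith [pi_pos]))
      (by nlinarith)
  have hSB : ∀ r, 0 < r → sin (π * γ) * ((1 - γ) / 2 * cμ) * min (r ^ γ) (r ^ (1 - γ)) ≤ S r :=
    fun r hr => by
      rw [hS, ← hγμ, mul_right_comm]
      exact sin_mul_min_rpow_mul_setIntegral_le hμ_int hμ_nonneg hγ₀.le hr
  have hbound : ∀ t, 0 < t → g t ≤ A * (√π * t ^ (γ - 1) + Gamma γ * t ^ (-γ)) := by
    intro t ht
    rw [hg t ht]
    calc 1 / π * ∫ r in Ioi 0, exp (-r * t) * S r / (S r ^ 2 + C r ^ 2)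
        ≤ 1 / π * ((sin (π * γ) * ((1 - γ) / 2 * cμ))⁻¹ *
            (Gamma (1 - γ) * t ^ (γ - 1) + Gamma γ * t ^ (-γ))) := by
          gcongr
          exact setIntegral_exp_mul_div_le hB hγ₀ (by linarith) ht hSB
      _ ≤ A * (√π * t ^ (γ - 1) + Gamma γ * t ^ (-γ)) :=
          one_div_pi_mul_inv_sin_mul_le hγ₀ hγ₁ hcμ (by positivity) (by positivity)
  refine ⟨hbound, A * (√π + Gamma γ), by positivity, fun t ht => (hbound t ht).trans ?_⟩
  rw [mul_assoc, add_mul]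
  gcongr
  exacts [le_max_left _ _, le_max_right _ _]

/-- For every `t > 0`, the kernel `g` satisfies
`g(t) ≤ (4 Γ(γ) √π / (π² c_μ)) (√π t^{γ-1} + Γ(γ) t^{-γ})`; in particular
`g(t) ≤ c max{t^{γ-1}, t^{-γ}}` for a constant `c` depending only on `μ`. -/
theorem stmt_6 (μ : ℝ → ℝ)
    (hμ_int : IntegrableOn μ (Ioo 0 1))
    (hμ_nonneg : ∀ α ∈ Ioo (0:ℝ) 1, 0 ≤ μ α)
    (hμ_ne : ¬ (∀ᵐ α ∂(volume.restrict (Ioo (0:ℝ) 1)), μ α = 0))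
    (hcμ : 0 < ∫ α in Ioo (0:ℝ) 1, μ α)
    (γ : ℝ) (hγ : γ ∈ Ioo (0:ℝ) (1/2))
    (hγμ : (∫ α in Ioo γ (1 - γ), μ α) = ((1 - γ) / 2) * ∫ α in Ioo (0:ℝ) 1, μ α)
    (S C g : ℝ → ℝ)
    (hS : ∀ r : ℝ, S r = ∫ α in Ioo (0:ℝ) 1, Real.sin (π * α) * r ^ α * μ α)
    (hC : ∀ r : ℝ, C r = ∫ α in Ioo (0:ℝ) 1, Real.cos (π * α) * r ^ α * μ α)
    (hg : ∀ t : ℝ, 0 < t →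
      g t = (1/π) * ∫ r in Ioi (0:ℝ), Real.exp (-r * t) * S r / ((S r)^2 + (C r)^2)) :
    (∀ t : ℝ, 0 < t →
      g t ≤ (4 * Real.Gamma γ * Real.sqrt π / (π^2 * ∫ α in Ioo (0:ℝ) 1, μ α)) *
        (Real.sqrt π * t ^ (γ - 1) + Real.Gamma γ * t ^ (-γ))) ∧
    (∃ c : ℝ, 0 < c ∧ ∀ t : ℝ, 0 < t → g t ≤ c * max (t ^ (γ - 1)) (t ^ (-γ))) :=
  stmt_6_general μ hμ_int hμ_nonneg hcμ γ hγ hγμ S C g hS hg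
end

section
/- The kernel g is nonincreasing on (0, ∞), and for every fixed T > 0 there exists a constant C (depending only on μ and T) such that g(t) ≤ C · t^{γ-1} for all 0 < t ≤ T. -/
/-!
On `[γ, 1 - γ]` we have `sin (π α) ≥ sin (π γ)` and `r ^ α ≥ min (r ^ γ) (r ^ (1 - γ))`, so the
choice of `γ` gives `S r ≥ K · min (r ^ γ) (r ^ (1 - γ))` with `K = sin (π γ) (1 - γ) c_μ / 2 > 0`.
Since `S / (S² + C²) ≤ 1 / S`, the integrand defining `g` is nonnegative and dominated by
`K⁻¹ (r ^ (γ - 1) + r ^ (-γ)) e^{-t r}`, whose integral is `K⁻¹ (Γ(γ) t^{-γ} + Γ(1-γ) t^{γ-1})`;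
for `t ≤ T` the term `t^{-γ}` is at most `T^{1-2γ} t^{γ-1}`. Monotonicity of `g` is pointwise
monotonicity of `e^{-r t}` in `t`.
-/

open MeasureTheory Real Set

namespace Real

lemma sin_pi_mul_le_sin_pi_mul_of_mem_Icc {γ α : ℝ} (hγ : 0 ≤ γ) (hα : α ∈ Icc γ (1 - γ)) :
    sin (π * γ) ≤ sin (π * α) := by
  have mono : ∀ β, γ ≤ β → β ≤ 1 / 2 → sin (π * γ) ≤ sin (π * β) := fun β hγβ hβ =>
    strictMonoOn_sin.monotoneOn ⟨by nlinarith [pi_pos], by nlinarith [pi_pos]⟩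
      ⟨by nlinarith [pi_pos], by nlinarith [pi_pos]⟩ (by nlinarith [pi_pos])
  rcases le_total α (1 / 2) with h | h
  · exact mono α hα.1 h
  · rw [show sin (π * α) = sin (π * (1 - α)) by rw [mul_one_sub, sin_pi_sub]]
    exact mono (1 - α) (by linarith [hα.2]) (by linarith)

lemma min_rpow_le_rpow_of_mem_Icc {r a b α : ℝ} (hr : 0 < r) (hα : α ∈ Icc a b) :
    min (r ^ a) (r ^ b) ≤ r ^ α := by
  rcases le_total 1 r with h | h
  · exact (min_le_left _ _).trans (rpow_le_rpow_of_exponent_le h hα.1)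
  · exact (min_le_right _ _).trans (rpow_le_rpow_of_exponent_ge hr h hα.2)

lemma rpow_le_max_one_self {r α : ℝ} (hr : 0 ≤ r) (hα : α ∈ Icc (0 : ℝ) 1) :
    r ^ α ≤ max 1 r := by
  rcases le_total 1 r with h | h
  · exact le_max_of_le_right ((rpow_le_rpow_of_exponent_le h hα.2).trans_eq (rpow_one r))
  · exact le_max_of_le_left (rpow_le_one hr h hα.1)

lemma inv_min_rpow_le_rpow_add_rpow {r γ : ℝ} (hr : 0 < r) :
    (min (r ^ γ) (r ^ (1 - γ)))⁻¹ ≤ r ^ (γ - 1) + r ^ (-γ) := by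
  have h₁ : 0 ≤ r ^ (γ - 1) := rpow_nonneg hr.le _
  have h₂ : 0 ≤ r ^ (-γ) := rpow_nonneg hr.le _
  rcases min_cases (r ^ γ) (r ^ (1 - γ)) with ⟨h, -⟩ | ⟨h, -⟩
  · rw [h, ← rpow_neg hr.le]
    linarith
  · rw [h, ← rpow_neg hr.le, neg_sub]
    linarith

lemma one_div_rpow_one_sub {t : ℝ} (ht : 0 ≤ t) (γ : ℝ) : (1 / t) ^ (1 - γ) = t ^ (γ - 1) := by
  rw [one_div, inv_rpow ht, ← rpow_neg ht, neg_sub]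

lemma one_div_rpow_le_rpow_mul_rpow_sub_one {t T γ : ℝ} (ht : 0 < t) (htT : t ≤ T)
    (hγ : γ ≤ 1 / 2) : (1 / t) ^ γ ≤ T ^ (1 - 2 * γ) * t ^ (γ - 1) := by
  calc (1 / t) ^ γ = t ^ (1 - 2 * γ) * t ^ (γ - 1) := by
        rw [one_div, inv_rpow ht.le, ← rpow_neg ht.le, ← rpow_add ht]; ring_nf
    _ ≤ T ^ (1 - 2 * γ) * t ^ (γ - 1) := by
        gcongr
        linarith

end Real

lemma integrableOn_mul_rpow_mul {c w : ℝ → ℝ} (hw : IntegrableOn w (Ioo 0 1))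
    (hc : Continuous c) (hc_le : ∀ α, |c α| ≤ 1) {r : ℝ} (hr : 0 < r) :
    IntegrableOn (fun α => c α * r ^ α * w α) (Ioo 0 1) := by
  refine hw.bdd_mul (c := max 1 r) (by fun_prop) ?_
  filter_upwards [ae_restrict_mem measurableSet_Ioo] with α hα
  rw [norm_mul, norm_eq_abs, norm_of_nonneg (rpow_nonneg hr.le α)]
  calc |c α| * r ^ α ≤ 1 * max 1 r :=
        mul_le_mul (hc_le α) (rpow_le_max_one_self hr.le (Ioo_subset_Icc_self hα))
          (rpow_nonneg hr.le α) zero_le_one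
    _ = max 1 r := one_mul _

lemma aestronglyMeasurable_integral_mul_rpow_mul {c w : ℝ → ℝ} (hc : Continuous c)
    {m : Measure ℝ} [SFinite m] (hw : AEStronglyMeasurable w m) (ν : Measure ℝ) :
    AEStronglyMeasurable (fun r => ∫ α, c α * r ^ α * w α ∂m) ν :=
  AEStronglyMeasurable.integral_prod_right' (f := fun p : ℝ × ℝ => c p.2 * p.1 ^ p.2 * w p.2)
    ((by fun_prop : Measurable fun p : ℝ × ℝ => c p.2 * p.1 ^ p.2).aestronglyMeasurable.mul
      hw.comp_snd)

lemma mul_min_rpow_le_integral_sin_mul_rpow_mul {w : ℝ → ℝ} (hw : IntegrableOn w (Ioo 0 1))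
    (hw_nonneg : ∀ α ∈ Ioo (0 : ℝ) 1, 0 ≤ w α) {γ r : ℝ} (hγ : 0 ≤ γ) (hr : 0 < r) :
    sin (π * γ) * (∫ α in Ioo γ (1 - γ), w α) * min (r ^ γ) (r ^ (1 - γ)) ≤
      ∫ α in Ioo 0 1, sin (π * α) * r ^ α * w α := by
  have hsub : Ioo γ (1 - γ) ⊆ Ioo 0 1 := fun α hα => ⟨hγ.trans_lt hα.1, by linarith [hα.2]⟩
  have hint := integrableOn_mul_rpow_mul (c := fun α => sin (π * α)) hw (by fun_prop)
    (fun α => abs_sin_le_one _) hr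
  have hsin_nonneg : ∀ α ∈ Ioo (0 : ℝ) 1, 0 ≤ sin (π * α) := fun α hα =>
    sin_nonneg_of_nonneg_of_le_pi (by nlinarith [pi_pos, hα.1]) (by nlinarith [pi_pos, hα.2])
  calc sin (π * γ) * (∫ α in Ioo γ (1 - γ), w α) * min (r ^ γ) (r ^ (1 - γ))
      = ∫ α in Ioo γ (1 - γ), sin (π * γ) * min (r ^ γ) (r ^ (1 - γ)) * w α := by
        rw [integral_const_mul]; ring
    _ ≤ ∫ α in Ioo γ (1 - γ), sin (π * α) * r ^ α * w α := by
        refine setIntegral_mono_on ((hw.mono_set hsub).const_mul _) (hint.mono_set hsub)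
          measurableSet_Ioo fun α hα => ?_
        have hαIcc : α ∈ Icc γ (1 - γ) := Ioo_subset_Icc_self hα
        gcongr
        · exact hw_nonneg α (hsub hα)
        · exact hsin_nonneg α (hsub hα)
        · exact sin_pi_mul_le_sin_pi_mul_of_mem_Icc hγ hαIcc
        · exact min_rpow_le_rpow_of_mem_Icc hr hαIcc
    _ ≤ ∫ α in Ioo 0 1, sin (π * α) * r ^ α * w α := by
        refine setIntegral_mono_set hint ?_ hsub.eventuallyLE
        filter_upwards [ae_restrict_mem measurableSet_Ioo] with α hα
        have := hw_nonneg α hα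
        have := hsin_nonneg α hα
        positivity

lemma integrableOn_rpow_mul_exp_neg_mul {s t : ℝ} (hs : -1 < s) (ht : 0 < t) :
    IntegrableOn (fun r => r ^ s * exp (-(t * r))) (Ioi 0) :=
  (integrableOn_rpow_mul_exp_neg_mul_rpow hs zero_lt_one ht).congr_fun
    (fun r _ => by simp only [rpow_one, neg_mul]) measurableSet_Ioi

lemma integrableOn_rpow_add_rpow_mul_exp_neg_mul {γ t : ℝ} (hγ : γ ∈ Ioo (0 : ℝ) 1) (ht : 0 < t) :
    IntegrableOn (fun r => (r ^ (γ - 1) + r ^ (-γ)) * exp (-(t * r))) (Ioi 0) :=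
  ((integrableOn_rpow_mul_exp_neg_mul (by linarith [hγ.1]) ht).add
    (integrableOn_rpow_mul_exp_neg_mul (by linarith [hγ.2]) ht)).congr_fun
      (fun r _ => (add_mul _ _ _).symm) measurableSet_Ioi

lemma integral_rpow_add_rpow_mul_exp_neg_mul {γ t : ℝ} (hγ : γ ∈ Ioo (0 : ℝ) 1) (ht : 0 < t) :
    ∫ r in Ioi 0, (r ^ (γ - 1) + r ^ (-γ)) * exp (-(t * r)) =
      (1 / t) ^ γ * Gamma γ + (1 / t) ^ (1 - γ) * Gamma (1 - γ) := by
  simp only [add_mul]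
  rw [integral_add (integrableOn_rpow_mul_exp_neg_mul (by linarith [hγ.1]) ht)
      (integrableOn_rpow_mul_exp_neg_mul (by linarith [hγ.2]) ht),
    integral_rpow_mul_exp_neg_mul_Ioi hγ.1 ht, show -γ = (1 - γ) - 1 by ring,
    integral_rpow_mul_exp_neg_mul_Ioi (sub_pos.2 hγ.2) ht]

section Kernel

variable {S C : ℝ → ℝ} {K γ : ℝ} (hK : 0 < K)
  (hS : ∀ r, 0 < r → K * min (r ^ γ) (r ^ (1 - γ)) ≤ S r)
include hK hS

lemma pos_of_forall_mul_min_rpow_le {r : ℝ} (hr : 0 < r) : 0 < S r :=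
  (mul_pos hK (lt_min (rpow_pos_of_pos hr _) (rpow_pos_of_pos hr _))).trans_le (hS r hr)

lemma kernel_integrand_le {r : ℝ} (hr : 0 < r) (t : ℝ) :
    exp (-r * t) * S r / (S r ^ 2 + C r ^ 2) ≤
      K⁻¹ * ((r ^ (γ - 1) + r ^ (-γ)) * exp (-(t * r))) := by
  have hKm : 0 < K * min (r ^ γ) (r ^ (1 - γ)) :=
    mul_pos hK (lt_min (rpow_pos_of_pos hr _) (rpow_pos_of_pos hr _))
  have hSr := pos_of_forall_mul_min_rpow_le hK hS hr
  calc exp (-r * t) * S r / (S r ^ 2 + C r ^ 2) = exp (-(t * r)) * (S r / (S r ^ 2 + C r ^ 2)) := by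
        rw [mul_div_assoc, neg_mul, mul_comm r t]
    _ ≤ exp (-(t * r)) * (K * min (r ^ γ) (r ^ (1 - γ)))⁻¹ := by
        gcongr
        exact (div_sq_add_sq_le_inv hSr).trans (inv_anti₀ hKm (hS r hr))
    _ = K⁻¹ * ((min (r ^ γ) (r ^ (1 - γ)))⁻¹ * exp (-(t * r))) := by
        rw [mul_inv]; ring
    _ ≤ K⁻¹ * ((r ^ (γ - 1) + r ^ (-γ)) * exp (-(t * r))) := by
        gcongr
        exact inv_min_rpow_le_rpow_add_rpow hr

lemma kernel_integrand_nonneg {r : ℝ} (hr : 0 < r) (t : ℝ) :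
    0 ≤ exp (-r * t) * S r / (S r ^ 2 + C r ^ 2) := by
  have := pos_of_forall_mul_min_rpow_le hK hS hr
  positivity

lemma integrableOn_kernel_integrand (hSm : AEStronglyMeasurable S (volume.restrict (Ioi 0)))
    (hCm : AEStronglyMeasurable C (volume.restrict (Ioi 0))) (hγ : γ ∈ Ioo (0 : ℝ) 1) {t : ℝ}
    (ht : 0 < t) : IntegrableOn (fun r => exp (-r * t) * S r / (S r ^ 2 + C r ^ 2)) (Ioi 0) := by
  refine ((integrableOn_rpow_add_rpow_mul_exp_neg_mul hγ ht).const_mul K⁻¹).mono' ?_ ?_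
  · have := hSm.aemeasurable
    have := hCm.aemeasurable
    exact (by fun_prop : AEMeasurable _ _).aestronglyMeasurable
  · filter_upwards [ae_restrict_mem measurableSet_Ioi] with r hr
    rw [norm_of_nonneg (kernel_integrand_nonneg hK hS hr t)]
    exact kernel_integrand_le hK hS hr t

lemma integral_kernel_integrand_le (hγ : γ ∈ Ioo (0 : ℝ) 1) {t : ℝ} (ht : 0 < t) :
    ∫ r in Ioi 0, exp (-r * t) * S r / (S r ^ 2 + C r ^ 2) ≤
      K⁻¹ * ((1 / t) ^ γ * Gamma γ + (1 / t) ^ (1 - γ) * Gamma (1 - γ)) := by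
  rw [← integral_rpow_add_rpow_mul_exp_neg_mul hγ ht, ← integral_const_mul]
  refine integral_mono_of_nonneg ?_
    ((integrableOn_rpow_add_rpow_mul_exp_neg_mul hγ ht).const_mul _) ?_
  · filter_upwards [ae_restrict_mem measurableSet_Ioi] with r hr
    exact kernel_integrand_nonneg hK hS hr t
  · filter_upwards [ae_restrict_mem measurableSet_Ioi] with r hr
    exact kernel_integrand_le hK hS hr t

lemma antitoneOn_integral_kernel_integrand (hSm : AEStronglyMeasurable S (volume.restrict (Ioi 0)))
    (hCm : AEStronglyMeasurable C (volume.restrict (Ioi 0))) (hγ : γ ∈ Ioo (0 : ℝ) 1) :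
    AntitoneOn (fun t => ∫ r in Ioi 0, exp (-r * t) * S r / (S r ^ 2 + C r ^ 2)) (Ioi 0) := by
  intro t₁ ht₁ t₂ _ ht
  refine integral_mono_of_nonneg ?_ (integrableOn_kernel_integrand hK hS hSm hCm hγ ht₁) ?_
  · filter_upwards [ae_restrict_mem measurableSet_Ioi] with r hr
    exact kernel_integrand_nonneg hK hS hr t₂
  · filter_upwards [ae_restrict_mem measurableSet_Ioi] with r (hr : 0 < r)
    have := pos_of_forall_mul_min_rpow_le hK hS hr
    have : -r * t₂ ≤ -r * t₁ := by nlinarith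
    gcongr

end Kernel

theorem stmt_8_general (μ : ℝ → ℝ)
    (hμ_int : IntegrableOn μ (Ioo 0 1))
    (hμ_nonneg : ∀ α ∈ Ioo (0:ℝ) 1, 0 ≤ μ α)
    (hcμ : 0 < ∫ α in Ioo (0:ℝ) 1, μ α)
    (γ : ℝ) (hγ : γ ∈ Ioo (0:ℝ) (1/2))
    (hγμ : (∫ α in Ioo γ (1 - γ), μ α) = ((1 - γ) / 2) * ∫ α in Ioo (0:ℝ) 1, μ α)
    (S C g : ℝ → ℝ)
    (hS : ∀ r : ℝ, S r = ∫ α in Ioo (0:ℝ) 1, Real.sin (π * α) * r ^ α * μ α)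
    (hC : ∀ r : ℝ, C r = ∫ α in Ioo (0:ℝ) 1, Real.cos (π * α) * r ^ α * μ α)
    (hg : ∀ t : ℝ, 0 < t →
      g t = (1/π) * ∫ r in Ioi (0:ℝ), Real.exp (-r * t) * S r / ((S r)^2 + (C r)^2)) :
    AntitoneOn g (Ioi 0) ∧
    (∀ T : ℝ, 0 < T → ∃ C₀ : ℝ, ∀ t : ℝ, 0 < t → t ≤ T → g t ≤ C₀ * t ^ (γ - 1)) := by
  obtain ⟨hγ0, hγ2⟩ := hγ
  have hγ1 : γ ∈ Ioo (0 : ℝ) 1 := ⟨hγ0, by linarith⟩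
  set K := sin (π * γ) * ∫ α in Ioo γ (1 - γ), μ α with hK_def
  have hK : 0 < K := by
    have : 0 < sin (π * γ) := sin_pos_of_pos_of_lt_pi (by positivity) (by nlinarith [pi_pos])
    have : 0 < 1 - γ := by linarith
    rw [hK_def, hγμ]
    positivity
  have hS_ge (r : ℝ) (hr : 0 < r) : K * min (r ^ γ) (r ^ (1 - γ)) ≤ S r :=
    (hS r).symm ▸ mul_min_rpow_le_integral_sin_mul_rpow_mul hμ_int hμ_nonneg hγ0.le hr
  have hSm : AEStronglyMeasurable S (volume.restrict (Ioi 0)) := by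
    rw [funext hS]
    exact aestronglyMeasurable_integral_mul_rpow_mul (by fun_prop) hμ_int.1 _
  have hCm : AEStronglyMeasurable C (volume.restrict (Ioi 0)) := by
    rw [funext hC]
    exact aestronglyMeasurable_integral_mul_rpow_mul (by fun_prop) hμ_int.1 _
  refine ⟨fun t₁ ht₁ t₂ ht₂ ht => ?_, fun T _ =>
    ⟨1 / π * K⁻¹ * (Gamma γ * T ^ (1 - 2 * γ) + Gamma (1 - γ)), fun t ht htT => ?_⟩⟩
  · rw [hg t₁ ht₁, hg t₂ ht₂]
    gcongr 1 / π * ?_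
    exact antitoneOn_integral_kernel_integrand hK hS_ge hSm hCm hγ1 ht₁ ht₂ ht
  · calc g t ≤ 1 / π * (K⁻¹ * ((1 / t) ^ γ * Gamma γ + (1 / t) ^ (1 - γ) * Gamma (1 - γ))) := by
          rw [hg t ht]
          gcongr
          exact integral_kernel_integrand_le hK hS_ge hγ1 ht
      _ ≤ 1 / π * (K⁻¹ *
            (T ^ (1 - 2 * γ) * t ^ (γ - 1) * Gamma γ + t ^ (γ - 1) * Gamma (1 - γ))) := by
          have := Gamma_pos_of_pos hγ0
          rw [one_div_rpow_one_sub ht.le]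
          gcongr
          exact one_div_rpow_le_rpow_mul_rpow_sub_one ht htT hγ2.le
      _ = 1 / π * K⁻¹ * (Gamma γ * T ^ (1 - 2 * γ) + Gamma (1 - γ)) * t ^ (γ - 1) := by ring

/-- The kernel `g` is nonincreasing on `(0, ∞)`, and for every fixed `T > 0`
there exists a constant `C` (depending only on `μ` and `T`) such that
`g(t) ≤ C t^{γ-1}` for all `0 < t ≤ T`. -/
theorem stmt_8 (μ : ℝ → ℝ)
    (hμ_int : IntegrableOn μ (Ioo 0 1))
    (hμ_nonneg : ∀ α ∈ Ioo (0:ℝ) 1, 0 ≤ μ α)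
    (hμ_ne : ¬ (∀ᵐ α ∂(volume.restrict (Ioo (0:ℝ) 1)), μ α = 0))
    (hcμ : 0 < ∫ α in Ioo (0:ℝ) 1, μ α)
    (γ : ℝ) (hγ : γ ∈ Ioo (0:ℝ) (1/2))
    (hγμ : (∫ α in Ioo γ (1 - γ), μ α) = ((1 - γ) / 2) * ∫ α in Ioo (0:ℝ) 1, μ α)
    (S C g : ℝ → ℝ)
    (hS : ∀ r : ℝ, S r = ∫ α in Ioo (0:ℝ) 1, Real.sin (π * α) * r ^ α * μ α)
    (hC : ∀ r : ℝ, C r = ∫ α in Ioo (0:ℝ) 1, Real.cos (π * α) * r ^ α * μ α)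
    (hg : ∀ t : ℝ, 0 < t →
      g t = (1/π) * ∫ r in Ioi (0:ℝ), Real.exp (-r * t) * S r / ((S r)^2 + (C r)^2)) :
    AntitoneOn g (Ioi 0) ∧
    (∀ T : ℝ, 0 < T → ∃ C₀ : ℝ, ∀ t : ℝ, 0 < t → t ≤ T → g t ≤ C₀ * t ^ (γ - 1)) :=
  stmt_8_general μ hμ_int hμ_nonneg hcμ γ hγ hγμ S C g hS hC hg
end

section
/- For every r > 0, S(r) := ∫₀¹ sin(πα) r^α μ(α) dα satisfies S(r) ≥ ((1-γ)/2) c_μ sin(πγ) · r^{1-γ} for 0 < r ≤ 1 and S(r) ≥ ((1-γ)/2) c_μ sin(πγ) · r^{γ} for r > 1; in particular S(r) > 0 for every r > 0. -/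
open MeasureTheory Real Set

lemma sin_pi_mono {γ α : ℝ} (hγ0 : 0 < γ) (h1 : γ ≤ α) (h2 : α ≤ 1 - γ) :
    Real.sin (π * γ) ≤ Real.sin (π * α) := by
  have hπ := Real.pi_pos
  have hγh : γ ≤ 1/2 := by linarith
  rcases le_or_gt α (1/2) with hα | hα
  · apply Real.strictMonoOn_sin.monotoneOn
    · constructor <;> nlinarith
    · constructor <;> nlinarith
    · nlinarith
  · have : Real.sin (π * α) = Real.sin (π * (1 - α)) := by
      rw [show π * (1 - α) = π - π * α by ring, Real.sin_pi_sub]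
    rw [this]
    apply Real.strictMonoOn_sin.monotoneOn
    · constructor <;> nlinarith
    · constructor <;> nlinarith
    · nlinarith

/-- For every `r > 0`, `S(r) = ∫₀¹ sin(πα) r^α μ(α) dα` satisfies
`S(r) ≥ ((1-γ)/2) c_μ sin(πγ) r^{1-γ}` for `0 < r ≤ 1` and
`S(r) ≥ ((1-γ)/2) c_μ sin(πγ) r^γ` for `r > 1`; in particular `S(r) > 0`. -/
theorem stmt_18 (μ : ℝ → ℝ)
    (hμ_int : IntegrableOn μ (Ioo 0 1))
    (hμ_nonneg : ∀ α ∈ Ioo (0:ℝ) 1, 0 ≤ μ α)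
    (hμ_ne : ¬ (∀ᵐ α ∂(volume.restrict (Ioo (0:ℝ) 1)), μ α = 0))
    (hcμ : 0 < ∫ α in Ioo (0:ℝ) 1, μ α)
    (γ : ℝ) (hγ : γ ∈ Ioo (0:ℝ) (1/2))
    (hγμ : (∫ α in Ioo γ (1 - γ), μ α) = ((1 - γ) / 2) * ∫ α in Ioo (0:ℝ) 1, μ α)
    (S : ℝ → ℝ)
    (hS : ∀ r : ℝ, S r = ∫ α in Ioo (0:ℝ) 1, Real.sin (π * α) * r ^ α * μ α) :
    ∀ r : ℝ, 0 < r →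
      (r ≤ 1 → ((1 - γ) / 2) * (∫ α in Ioo (0:ℝ) 1, μ α) * Real.sin (π * γ) * r ^ (1 - γ)
        ≤ S r) ∧
      (1 < r → ((1 - γ) / 2) * (∫ α in Ioo (0:ℝ) 1, μ α) * Real.sin (π * γ) * r ^ γ
        ≤ S r) ∧
      0 < S r := by
  obtain ⟨hγ0, hγh⟩ := hγ
  have hπ := Real.pi_pos
  intro r hr
  -- continuity of the weight function
  have hcontw : Continuous fun α : ℝ => Real.sin (π * α) * r ^ α := by
    have : (fun α : ℝ => r ^ α) = fun α => Real.exp (Real.log r * α) := by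
      funext α; rw [Real.rpow_def_of_pos hr, mul_comm]
    rw [show (fun α : ℝ => Real.sin (π * α) * r ^ α)
        = fun α => Real.sin (π * α) * Real.exp (Real.log r * α) by
      funext α; rw [Real.rpow_def_of_pos hr, mul_comm]]
    exact (Real.continuous_sin.comp (continuous_const.mul continuous_id)).mul
      (Real.continuous_exp.comp (continuous_const.mul continuous_id))
  -- integrability of the integrand on Ioo 0 1
  have hint : IntegrableOn (fun α => Real.sin (π * α) * r ^ α * μ α) (Ioo 0 1) := by
    apply MeasureTheory.Integrable.mono' (g := fun α => max 1 r * μ α)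
      (hμ_int.const_mul _)
    · exact (hcontw.aestronglyMeasurable).mul hμ_int.aestronglyMeasurable
    · filter_upwards [ae_restrict_mem measurableSet_Ioo] with α hα
      have hμα := hμ_nonneg α hα
      have h1 : |Real.sin (π * α)| ≤ 1 := Real.abs_sin_le_one _
      have h2 : r ^ α ≤ max 1 r := by
        rcases le_or_gt r 1 with h | h
        · exact le_trans (Real.rpow_le_one hr.le h hα.1.le) (le_max_left _ _)
        · exact le_trans (by simpa using Real.rpow_le_rpow_of_exponent_le h.le hα.2.le)
            (le_max_right _ _)
      have h2' : 0 ≤ r ^ α := (Real.rpow_pos_of_pos hr α).le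
      calc ‖Real.sin (π * α) * r ^ α * μ α‖
          = |Real.sin (π * α)| * (r ^ α) * μ α := by
            rw [Real.norm_eq_abs, abs_mul, abs_mul, abs_of_nonneg h2', abs_of_nonneg hμα]
        _ ≤ 1 * max 1 r * μ α := by
            apply mul_le_mul_of_nonneg_right _ hμα
            exact mul_le_mul h1 h2 h2' zero_le_one
        _ = max 1 r * μ α := by ring
  -- nonnegativity of the integrand on Ioo 0 1
  have hnonneg : ∀ α ∈ Ioo (0:ℝ) 1, 0 ≤ Real.sin (π * α) * r ^ α * μ α := by
    intro α hα
    have hs : 0 ≤ Real.sin (π * α) :=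
      Real.sin_nonneg_of_nonneg_of_le_pi (by nlinarith [hα.1]) (by nlinarith [hα.2])
    exact mul_nonneg (mul_nonneg hs (Real.rpow_pos_of_pos hr α).le) (hμ_nonneg α hα)
  have hsub : Ioo γ (1 - γ) ⊆ Ioo (0:ℝ) 1 :=
    Ioo_subset_Ioo hγ0.le (by linarith)
  have hstep1 : (∫ α in Ioo γ (1 - γ), Real.sin (π * α) * r ^ α * μ α)
      ≤ ∫ α in Ioo (0:ℝ) 1, Real.sin (π * α) * r ^ α * μ α := by
    apply setIntegral_mono_set hint
    · filter_upwards [ae_restrict_mem measurableSet_Ioo] with α hα using hnonneg α hα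
    · exact HasSubset.Subset.eventuallyLE hsub
  -- the key lower bound over the inner interval
  have key : ∀ c : ℝ, 0 ≤ c → (∀ α ∈ Ioo γ (1 - γ), c ≤ r ^ α) →
      Real.sin (π * γ) * c * (((1 - γ) / 2) * ∫ α in Ioo (0:ℝ) 1, μ α)
        ≤ ∫ α in Ioo γ (1 - γ), Real.sin (π * α) * r ^ α * μ α := by
    intro c hc hcle
    rw [← hγμ, ← MeasureTheory.integral_const_mul]
    apply setIntegral_mono_on
    · exact (hμ_int.mono_set hsub).const_mul _
    · exact hint.mono_set hsub
    · exact measurableSet_Ioo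
    · intro α hα
      have hμα := hμ_nonneg α (hsub hα)
      have hs : 0 ≤ Real.sin (π * α) :=
        Real.sin_nonneg_of_nonneg_of_le_pi (by nlinarith [(hsub hα).1])
          (by nlinarith [(hsub hα).2])
      have hsm : Real.sin (π * γ) ≤ Real.sin (π * α) :=
        sin_pi_mono hγ0 hα.1.le hα.2.le
      have := mul_le_mul hsm (hcle α hα) hc hs
      nlinarith [this, hμα]
  have hsinpos : 0 < Real.sin (π * γ) :=
    Real.sin_pos_of_pos_of_lt_pi (by positivity) (by nlinarith)
  refine ⟨?_, ?_, ?_⟩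
  · intro hr1
    have hb : ∀ α ∈ Ioo γ (1 - γ), r ^ (1 - γ) ≤ r ^ α := fun α hα =>
      Real.rpow_le_rpow_of_exponent_ge hr hr1 hα.2.le
    have := key (r ^ (1 - γ)) (Real.rpow_pos_of_pos hr _).le hb
    rw [hS r]
    calc ((1 - γ) / 2) * (∫ α in Ioo (0:ℝ) 1, μ α) * Real.sin (π * γ) * r ^ (1 - γ)
        = Real.sin (π * γ) * r ^ (1 - γ) * (((1 - γ) / 2) * ∫ α in Ioo (0:ℝ) 1, μ α) := by
          ring
      _ ≤ _ := le_trans this hstep1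
  · intro hr1
    have hb : ∀ α ∈ Ioo γ (1 - γ), r ^ γ ≤ r ^ α := fun α hα =>
      Real.rpow_le_rpow_of_exponent_le hr1.le hα.1.le
    have := key (r ^ γ) (Real.rpow_pos_of_pos hr _).le hb
    rw [hS r]
    calc ((1 - γ) / 2) * (∫ α in Ioo (0:ℝ) 1, μ α) * Real.sin (π * γ) * r ^ γ
        = Real.sin (π * γ) * r ^ γ * (((1 - γ) / 2) * ∫ α in Ioo (0:ℝ) 1, μ α) := by
          ring
      _ ≤ _ := le_trans this hstep1
  · have hpos : ∀ x : ℝ, 0 < ((1 - γ) / 2) * (∫ α in Ioo (0:ℝ) 1, μ α)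
        * Real.sin (π * γ) * r ^ x := fun x => by
      have := Real.rpow_pos_of_pos hr x
      have h1 : (0:ℝ) < (1 - γ) / 2 := by linarith
      positivity
    rcases le_or_gt r 1 with h | h
    · have hb : ∀ α ∈ Ioo γ (1 - γ), r ^ (1 - γ) ≤ r ^ α := fun α hα =>
        Real.rpow_le_rpow_of_exponent_ge hr h hα.2.le
      have := key (r ^ (1 - γ)) (Real.rpow_pos_of_pos hr _).le hb
      rw [hS r]
      calc (0:ℝ) < ((1 - γ) / 2) * (∫ α in Ioo (0:ℝ) 1, μ α)
            * Real.sin (π * γ) * r ^ (1 - γ) := hpos _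
        _ = Real.sin (π * γ) * r ^ (1 - γ) * (((1 - γ) / 2) * ∫ α in Ioo (0:ℝ) 1, μ α) := by
            ring
        _ ≤ _ := le_trans this hstep1
    · have hb : ∀ α ∈ Ioo γ (1 - γ), r ^ γ ≤ r ^ α := fun α hα =>
        Real.rpow_le_rpow_of_exponent_le h.le hα.1.le
      have := key (r ^ γ) (Real.rpow_pos_of_pos hr _).le hb
      rw [hS r]
      calc (0:ℝ) < ((1 - γ) / 2) * (∫ α in Ioo (0:ℝ) 1, μ α)
            * Real.sin (π * γ) * r ^ γ := hpos _
        _ = Real.sin (π * γ) * r ^ γ * (((1 - γ) / 2) * ∫ α in Ioo (0:ℝ) 1, μ α) := by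
            ring
        _ ≤ _ := le_trans this hstep1
end
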